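/- For any graph G and integer k ≥ 2, γ_{krt}(G) ≥ (2k/(k+1)) · γ(G). -/

import Mathlib

open SimpleGraph Finset

/-- `f` is a `k`-rainbow dominating function of `G`: every vertex with empty label
sees all colors of `Fin k` among its neighbors' labels. -/
def IsKRDF {V : Type*} (G : SimpleGraph V) (k : ℕ) (f : V → Finset (Fin k)) : Prop :=
  ∀ v, f v = ∅ → ∀ i : Fin k, ∃ u, G.Adj v u ∧ i ∈ f u

/-- `f` is a `k`-rainbow total dominating function of `G`: a `k`RDF such that every
vertex labeled by a singleton `{i}` has a neighbor whose label contains `i`. -/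
def IsKRTDF {V : Type*} (G : SimpleGraph V) (k : ℕ) (f : V → Finset (Fin k)) : Prop :=
  IsKRDF G k f ∧ ∀ v (i : Fin k), f v = {i} → ∃ u, G.Adj v u ∧ i ∈ f u

/-- The `k`-rainbow domination number of `G`. -/
noncomputable def rdnum {V : Type*} [Fintype V] (G : SimpleGraph V) (k : ℕ) : ℕ :=
  sInf {n | ∃ f : V → Finset (Fin k), IsKRDF G k f ∧ ∑ v, (f v).card = n}

/-- The `k`-rainbow total domination number of `G`. -/
noncomputable def rtdnum {V : Type*} [Fintype V] (G : SimpleGraph V) (k : ℕ) : ℕ :=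
  sInf {n | ∃ f : V → Finset (Fin k), IsKRTDF G k f ∧ ∑ v, (f v).card = n}

/-- The domination number of `G`. -/
noncomputable def domnum {V : Type*} [Fintype V] (G : SimpleGraph V) : ℕ :=
  sInf {n | ∃ D : Finset V, (∀ v ∉ D, ∃ u ∈ D, G.Adj u v) ∧ D.card = n}

/-- The total domination number of `G`. -/
noncomputable def totdomnum {V : Type*} [Fintype V] (G : SimpleGraph V) : ℕ :=
  sInf {n | ∃ D : Finset V, (∀ v, ∃ u ∈ D, G.Adj u v) ∧ D.card = n}

/-!
Take a kRTDF `f` of minimum weight and fix a colour `i`. The vertices whose label contains `i`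
or has at least two colours dominate every vertex except those labelled `{j}`, `j ≠ i`, all of
whose neighbours are labelled `{j}`. By totality such a vertex lies in the set `X_j` of vertices
labelled `{j}` with a neighbour labelled `{j}`; `X_j` has no isolated vertex, so by Ore's lemma
it is dominated by some `T_j` with `2 |T_j| ≤ |X_j|`. Adding all `T_j`, `j ≠ i`, gives a
dominating set for each colour, and summing the `k` bounds yields
`2 k γ ≤ ∑_v (2 |f' v| + (k - 1) [|f v| = 1]) ≤ (k + 1) w(f)`,
where `f' = saturate f` replaces every label with at least two colours by all `k` colours.
-/

namespace SimpleGraph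

variable {V : Type*}

def Dominates (G : SimpleGraph V) (D S : Finset V) : Prop :=
  ∀ v ∈ S, v ∈ D ∨ ∃ u ∈ D, G.Adj u v

variable {G : SimpleGraph V} [DecidableEq V]

lemma Dominates.sdiff_of_minimal {D X : Finset V} (hD : G.Dominates D X)
    (hmin : ∀ x ∈ D, ¬ G.Dominates (D.erase x) X) (hX : ∀ x ∈ X, ∃ y ∈ X, G.Adj x y) :
    G.Dominates (X \ D) X := by
  intro x hx
  by_cases hxD : x ∈ D
  swap
  · exact Or.inl (mem_sdiff.2 ⟨hx, hxD⟩)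
  right
  obtain ⟨y, hy, hyD, hyadj⟩ : ∃ y ∈ X, y ∉ D.erase x ∧ ∀ u ∈ D.erase x, ¬ G.Adj u y := by
    simpa [Dominates] using hmin x hxD
  by_cases hyx : y = x
  · subst hyx
    obtain ⟨z, hz, hyz⟩ := hX y hy
    exact ⟨z, mem_sdiff.2 ⟨hz, fun hzD => hyadj z (mem_erase.2 ⟨hyz.ne', hzD⟩) hyz.symm⟩,
      hyz.symm⟩
  · have hyD' : y ∉ D := fun h => hyD (mem_erase.2 ⟨hyx, h⟩)
    obtain ⟨u, huD, huy⟩ := (hD y hy).resolve_left hyD'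
    obtain rfl : u = x := by_contra fun hux => hyadj u (mem_erase.2 ⟨hux, huD⟩) huy
    exact ⟨y, mem_sdiff.2 ⟨hy, hyD'⟩, huy.symm⟩

/-- Ore's lemma for the subgraph induced on `X`. -/
theorem exists_dominates_two_mul_card_le (X : Finset V) (hX : ∀ x ∈ X, ∃ y ∈ X, G.Adj x y) :
    ∃ T, 2 * #T ≤ #X ∧ G.Dominates T X := by
  classical
  obtain ⟨D, hDmem, hmin⟩ := exists_min_image {D ∈ X.powerset | G.Dominates D X} card
    ⟨X, mem_filter.2 ⟨mem_powerset_self X, fun x hx => Or.inl hx⟩⟩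
  obtain ⟨hDX, hD⟩ := mem_filter.1 hDmem
  replace hDX := mem_powerset.1 hDX
  by_cases hsmall : 2 * #D ≤ #X
  · exact ⟨D, hsmall, hD⟩
  refine ⟨X \ D, ?_, hD.sdiff_of_minimal (fun x hx hxD => ?_) hX⟩
  · rw [card_sdiff_of_subset hDX]
    omega
  · have := hmin _ (mem_filter.2 ⟨mem_powerset.2 ((erase_subset x D).trans hDX), hxD⟩)
    have := card_erase_lt_of_mem hx
    omega

end SimpleGraph

lemma Finset.sum_card_filter_mem {ι α : Type*} [Fintype ι] [Fintype α] [DecidableEq ι]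
    (g : α → Finset ι) : ∑ i, #{a | i ∈ g a} = ∑ a, #(g a) := by
  simp only [card_eq_sum_ones, sum_filter]
  rw [sum_comm]
  simp

lemma Finset.sum_card_biUnion_erase_le {ι α : Type*} [Fintype ι] [DecidableEq ι] [DecidableEq α]
    (T : ι → Finset α) :
    ∑ i, #((univ.erase i).biUnion T) ≤ (Fintype.card ι - 1) * ∑ j, #(T j) :=
  calc ∑ i, #((univ.erase i).biUnion T)
      ≤ ∑ i, ∑ j ∈ univ.erase i, #(T j) := sum_le_sum fun _ _ => card_biUnion_le
    _ = ∑ j, ∑ i ∈ univ.erase j, #(T j) := sum_comm' (by simp [ne_comm])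
    _ = (Fintype.card ι - 1) * ∑ j, #(T j) := by simp [card_erase_of_mem, mul_sum]

section Rainbow

variable {V : Type*} {G : SimpleGraph V} {k : ℕ} {f : V → Finset (Fin k)}

lemma isKRTDF_const_univ (G : SimpleGraph V) (hk : 2 ≤ k) : IsKRTDF G k fun _ => univ := by
  refine ⟨fun v hv => absurd hv (univ_nonempty_iff.2 ⟨⟨0, by omega⟩⟩).ne_empty, fun v i hv => ?_⟩
  have := congrArg card hv
  simp only [card_univ, Fintype.card_fin, card_singleton] at this
  omega

variable (f) in
def saturate (v : V) : Finset (Fin k) := if 2 ≤ #(f v) then univ else f v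

@[simp]
lemma mem_saturate {v : V} {i : Fin k} : i ∈ saturate f v ↔ 2 ≤ #(f v) ∨ i ∈ f v := by
  unfold saturate
  split_ifs with h <;> simp [h]

variable [Fintype V]

lemma exists_isKRTDF_sum_card_eq_rtdnum (G : SimpleGraph V) (hk : 2 ≤ k) :
    ∃ f, IsKRTDF G k f ∧ ∑ v, #(f v) = rtdnum G k :=
  Nat.sInf_mem (s := {n | ∃ f : V → Finset (Fin k), IsKRTDF G k f ∧ ∑ v, #(f v) = n})
    ⟨_, _, isKRTDF_const_univ G hk, rfl⟩

lemma domnum_le_card {D : Finset V} (hD : ∀ v ∉ D, ∃ u ∈ D, G.Adj u v) : domnum G ≤ #D :=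
  Nat.sInf_le ⟨D, hD, rfl⟩

variable (f) in
lemma two_mul_sum_card_saturate_add_le :
    2 * ∑ v, #(saturate f v) + (k - 1) * #{v | #(f v) = 1} ≤ (k + 1) * ∑ v, #(f v) := by
  rw [card_eq_sum_ones, sum_filter, mul_sum, mul_sum, mul_sum, ← sum_add_distrib]
  refine sum_le_sum fun v _ => ?_
  have hk : #(f v) ≤ k := by simpa using card_le_univ (f v)
  unfold saturate
  split_ifs <;> simp_all <;> first | omega | nlinarith

variable [DecidableRel G.Adj]

variable (G f) in
def pairedSingletons (j : Fin k) : Finset V := {v | f v = {j} ∧ ∃ u, G.Adj v u ∧ f u = {j}}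

@[simp]
lemma mem_pairedSingletons {j : Fin k} {v : V} :
    v ∈ pairedSingletons G f j ↔ f v = {j} ∧ ∃ u, G.Adj v u ∧ f u = {j} := by
  simp [pairedSingletons]

lemma exists_adj_of_mem_pairedSingletons {j : Fin k} :
    ∀ x ∈ pairedSingletons G f j, ∃ y ∈ pairedSingletons G f j, G.Adj x y := by
  simp only [mem_pairedSingletons]
  rintro x ⟨hx, y, hxy, hy⟩
  exact ⟨y, ⟨hy, x, hxy.symm, hx⟩, hxy⟩

lemma sum_card_pairedSingletons_le : ∑ j, #(pairedSingletons G f j) ≤ #{v | #(f v) = 1} := by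
  classical
  have hdisj : ((univ : Finset (Fin k)) : Set (Fin k)).PairwiseDisjoint (pairedSingletons G f) := by
    intro j _ j' _ hjj'
    refine disjoint_left.2 fun v hv hv' => hjj' ?_
    rw [mem_pairedSingletons] at hv hv'
    exact singleton_injective (hv.1.symm.trans hv'.1)
  rw [← card_biUnion hdisj]
  refine card_le_card fun v hv => ?_
  obtain ⟨j, -, hv⟩ := mem_biUnion.1 hv
  simp [(mem_pairedSingletons.1 hv).1]

variable [DecidableEq V]

variable (f) in
def colorDominator (T : Fin k → Finset V) (i : Fin k) : Finset V :=
  ({v | i ∈ saturate f v} : Finset V) ∪ (univ.erase i).biUnion T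

lemma sum_card_colorDominator_le (T : Fin k → Finset V) :
    ∑ i, #(colorDominator f T i) ≤ ∑ v, #(saturate f v) + (k - 1) * ∑ j, #(T j) :=
  calc ∑ i, #(colorDominator f T i)
      ≤ ∑ i, (#{v | i ∈ saturate f v} + #((univ.erase i).biUnion T)) :=
        sum_le_sum fun _ _ => card_union_le _ _
    _ ≤ ∑ v, #(saturate f v) + (k - 1) * ∑ j, #(T j) := by
        rw [sum_add_distrib, sum_card_filter_mem]
        simpa using sum_card_biUnion_erase_le T

lemma colorDominator_dominates (hf : IsKRTDF G k f) {T : Fin k → Finset V}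
    (hT : ∀ j, G.Dominates (T j) (pairedSingletons G f j)) (i : Fin k) :
    ∀ v ∉ colorDominator f T i, ∃ u ∈ colorDominator f T i, G.Adj u v := by
  have mem_of_saturate {u : V} (hu : i ∈ saturate f u) : u ∈ colorDominator f T i :=
    mem_union_left _ (by simpa using hu)
  have mem_of_T {u : V} {j : Fin k} (hji : j ≠ i) (hu : u ∈ T j) : u ∈ colorDominator f T i :=
    mem_union_right _ (mem_biUnion.2 ⟨j, mem_erase.2 ⟨hji, mem_univ j⟩, hu⟩)
  intro v hv
  simp only [colorDominator, mem_union, mem_filter, mem_univ, true_and, mem_saturate,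
    mem_biUnion, mem_erase, and_true, not_or, not_le, not_exists, not_and] at hv
  obtain ⟨⟨hv2, hvi⟩, hvT⟩ := hv
  obtain hempty | ⟨j, hj⟩ : f v = ∅ ∨ ∃ j, f v = {j} := by
    rcases Nat.lt_succ_iff.1 hv2 |>.lt_or_eq with h | h
    · exact Or.inl (card_eq_zero.1 (by omega))
    · exact Or.inr (card_eq_one.1 h)
  · obtain ⟨u, hvu, hiu⟩ := hf.1 v hempty i
    exact ⟨u, mem_of_saturate (mem_saturate.2 (Or.inr hiu)), hvu.symm⟩
  obtain ⟨u, hvu, hju⟩ := hf.2 v j hj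
  by_cases hu : i ∈ saturate f u
  · exact ⟨u, mem_of_saturate hu, hvu.symm⟩
  have hji : j ≠ i := by rintro rfl; simp [hj] at hvi
  have hu1 : f u = {j} := by
    rw [mem_saturate, not_or, not_le] at hu
    exact eq_singleton_iff_unique_mem.2 ⟨hju, fun l hl => card_le_one.1 (by omega) l hl j hju⟩
  have hvX : v ∈ pairedSingletons G f j := mem_pairedSingletons.2 ⟨hj, u, hvu, hu1⟩
  obtain hvTj | ⟨w, hw, hwv⟩ := hT j v hvX
  · exact absurd hvTj (hvT j hji)
  · exact ⟨w, mem_of_T hji hw, hwv⟩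

end Rainbow

theorem rtdnum_ge_domnum {V : Type*} [Fintype V] (G : SimpleGraph V) (k : ℕ) (hk : 2 ≤ k) :
    2 * k * domnum G ≤ (k + 1) * rtdnum G k := by
  classical
  obtain ⟨f, hf, hw⟩ := exists_isKRTDF_sum_card_eq_rtdnum G hk
  choose T hT2 hT using fun j =>
    exists_dominates_two_mul_card_le (pairedSingletons G f j) exists_adj_of_mem_pairedSingletons
  have hpaired : 2 * ∑ j, #(T j) ≤ #{v | #(f v) = 1} := by
    rw [mul_sum]
    exact (sum_le_sum fun j _ => hT2 j).trans sum_card_pairedSingletons_le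
  calc 2 * k * domnum G = 2 * ∑ _i : Fin k, domnum G := by simp [mul_assoc]
    _ ≤ 2 * ∑ i, #(colorDominator f T i) := by
        gcongr with i
        exact domnum_le_card (colorDominator_dominates hf hT i)
    _ ≤ 2 * ∑ v, #(saturate f v) + (k - 1) * (2 * ∑ j, #(T j)) := by
        linarith [sum_card_colorDominator_le (f := f) T]
    _ ≤ 2 * ∑ v, #(saturate f v) + (k - 1) * #{v | #(f v) = 1} := by gcongr
    _ ≤ (k + 1) * rtdnum G k := hw ▸ two_mul_sum_card_saturate_add_le f
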